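/- Let f₃ denote the free Lie algebra over ℂ on three generators x, y, z, and let [x] and [y] denote the Lie ideals of f₃ generated by x and by y. Then [x] ∩ [y] = ⁅[x],[y]⁆, i.e. the intersection of the two ideals equals the Lie ideal spanned by all brackets [u,v] with u ∈ [x] and v ∈ [y]. -/

import Mathlib

/-!
Let `p`, `q` be the endomorphisms of `f₃` sending `x`, resp. `y`, to `0` and fixing the other
generators. They are commuting idempotents with `ker p = [x]`, `ker q = [y]`, and `im p ∪ im q`
generates `f₃`. The subspace `S = im p + im q + ⁅ker p, ker q⁆` is closed under the bracket: the
only nontrivial case is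
`⁅q b, p a⁆ = ⁅q b - p q b, p a - q p a⁆ + ⁅p q b, p a - q p a⁆ + ⁅q b, q p a⁆`,
whose three terms lie in `⁅ker p, ker q⁆`, `im p` and `im q`. Hence `S = f₃`. If
`p a + q b + k ∈ ker p ∩ ker q` with `k ∈ ⁅ker p, ker q⁆`, then `p a + q b` lies in both kernels,
which forces `p a = q p a` and so `p a + q b = q (p a + q b) = 0`.
-/

open FreeLieAlgebra

/-- The free Lie algebra over `ℂ` on three generators. -/
abbrev f3 : Type := FreeLieAlgebra ℂ (Fin 3)

noncomputable def X : f3 := FreeLieAlgebra.of ℂ 0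
noncomputable def Y : f3 := FreeLieAlgebra.of ℂ 1

/-- The Lie ideal of `f3` generated by an element `w`. -/
noncomputable def lieIdealGen (w : f3) : LieIdeal ℂ f3 :=
  LieSubmodule.lieSpan ℂ f3 {w}

namespace LieHom

variable {R L : Type*} [CommRing R] [LieRing L] [LieAlgebra R L] {p q : L →ₗ⁅R⁆ L}

theorem sub_apply_mem_ker (hp : ∀ x, p (p x) = p x) (x : L) : x - p x ∈ p.ker := by
  rw [mem_ker, map_sub, hp, sub_self]

def rangeSupLieKer (p q : L →ₗ⁅R⁆ L) : Submodule R L :=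
  p.range.toSubmodule ⊔ q.range.toSubmodule ⊔ (⁅p.ker, q.ker⁆ : LieIdeal R L).toSubmodule

theorem range_le_rangeSupLieKer_left : p.range.toSubmodule ≤ rangeSupLieKer p q :=
  le_sup_left.trans le_sup_left

theorem range_le_rangeSupLieKer_right : q.range.toSubmodule ≤ rangeSupLieKer p q :=
  le_sup_right.trans le_sup_left

theorem lie_ker_le_rangeSupLieKer :
    (⁅p.ker, q.ker⁆ : LieIdeal R L).toSubmodule ≤ rangeSupLieKer p q :=
  le_sup_right

theorem lie_apply_mem_rangeSupLieKer (hp : ∀ x, p (p x) = p x) (hq : ∀ x, q (q x) = q x)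
    (hpq : ∀ x, p (q x) = q (p x)) (a b : L) : ⁅q b, p a⁆ ∈ rangeSupLieKer p q := by
  have hb : q b - p (q b) ∈ p.ker := sub_apply_mem_ker hp _
  have ha : p a - q (p a) ∈ q.ker := sub_apply_mem_ker hq _
  have hpa : p a - q (p a) ∈ p.range :=
    (p.mem_range _).2 ⟨a - q a, by rw [map_sub, hpq]⟩
  have hqpa : q (p a) ∈ q.range := q.mem_range_self _
  have hpqb : p (q b) ∈ p.range := p.mem_range_self _
  have split : ⁅q b, p a⁆ = ⁅q b - p (q b), p a - q (p a)⁆ + ⁅p (q b), p a - q (p a)⁆ +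
      ⁅q b, q (p a)⁆ := by
    simp only [sub_lie, lie_sub]; abel
  rw [split]
  refine add_mem (add_mem ?_ ?_) ?_
  · exact lie_ker_le_rangeSupLieKer (LieSubmodule.lie_mem_lie hb ha)
  · exact range_le_rangeSupLieKer_left (p.range.lie_mem hpqb hpa)
  · exact range_le_rangeSupLieKer_right (q.range.lie_mem (q.mem_range_self b) hqpa)

theorem lie_mem_rangeSupLieKer (hp : ∀ x, p (p x) = p x) (hq : ∀ x, q (q x) = q x)
    (hpq : ∀ x, p (q x) = q (p x)) {u v : L} (hu : u ∈ rangeSupLieKer p q)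
    (hv : v ∈ rangeSupLieKer p q) : ⁅u, v⁆ ∈ rangeSupLieKer p q := by
  set K : LieIdeal R L := ⁅p.ker, q.ker⁆
  obtain ⟨_, hu', k, hk, rfl⟩ := Submodule.mem_sup.1 hu
  obtain ⟨_, ⟨a, rfl⟩, _, ⟨a', rfl⟩, rfl⟩ := Submodule.mem_sup.1 hu'
  obtain ⟨_, hv', k', hk', rfl⟩ := Submodule.mem_sup.1 hv
  obtain ⟨_, ⟨b, rfl⟩, _, ⟨b', rfl⟩, rfl⟩ := Submodule.mem_sup.1 hv'
  rw [add_lie, lie_add]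
  refine add_mem (add_mem ?_ (lie_ker_le_rangeSupLieKer (lie_mem_right R L K _ _ hk')))
    (lie_ker_le_rangeSupLieKer (lie_mem_left R L K _ _ hk))
  rw [add_lie, lie_add, lie_add]
  refine add_mem (add_mem ?_ ?_) (add_mem ?_ ?_)
  · exact range_le_rangeSupLieKer_left
      (p.range.lie_mem (p.mem_range_self a) (p.mem_range_self b))
  · rw [← lie_skew]
    exact neg_mem (lie_apply_mem_rangeSupLieKer hp hq hpq a b')
  · exact lie_apply_mem_rangeSupLieKer hp hq hpq b a'
  · exact range_le_rangeSupLieKer_right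
      (q.range.lie_mem (q.mem_range_self a') (q.mem_range_self b'))

theorem rangeSupLieKer_eq_top (hp : ∀ x, p (p x) = p x) (hq : ∀ x, q (q x) = q x)
    (hpq : ∀ x, p (q x) = q (p x)) (hgen : p.range ⊔ q.range = ⊤) :
    rangeSupLieKer p q = ⊤ := by
  let S : LieSubalgebra R L :=
    { rangeSupLieKer p q with lie_mem' := lie_mem_rangeSupLieKer hp hq hpq }
  have hS : p.range ⊔ q.range ≤ S :=
    sup_le (fun _ h ↦ range_le_rangeSupLieKer_left h) (fun _ h ↦ range_le_rangeSupLieKer_right h)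
  rw [hgen, top_le_iff] at hS
  exact congr_arg LieSubalgebra.toSubmodule hS

theorem apply_add_apply_eq_zero (hp : ∀ x, p (p x) = p x) (hq : ∀ x, q (q x) = q x)
    (hpq : ∀ x, p (q x) = q (p x)) {a b : L} (h : p a + q b ∈ p.ker ⊓ q.ker) :
    p a + q b = 0 := by
  obtain ⟨hpk, hqk⟩ := (LieSubmodule.mem_inf _ _ _).1 h
  rw [mem_ker, map_add, hp] at hpk
  rw [mem_ker] at hqk
  have hpa : q (p a) = p a := by
    rw [eq_neg_of_add_eq_zero_left hpk, map_neg, hpq, hq]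
  calc p a + q b = q (p a + q b) := by rw [map_add, hq, hpa]
    _ = 0 := hqk

theorem ker_inf_ker_eq_lie (hp : ∀ x, p (p x) = p x) (hq : ∀ x, q (q x) = q x)
    (hpq : ∀ x, p (q x) = q (p x)) (hgen : p.range ⊔ q.range = ⊤) :
    p.ker ⊓ q.ker = ⁅p.ker, q.ker⁆ := by
  refine le_antisymm (fun u hu ↦ ?_) (LieSubmodule.lie_le_inf _ _)
  have hu' : u ∈ rangeSupLieKer p q := by
    rw [rangeSupLieKer_eq_top hp hq hpq hgen]; exact Submodule.mem_top
  obtain ⟨_, hr, k, hk, rfl⟩ := Submodule.mem_sup.1 hu'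
  obtain ⟨_, ha, _, hb, rfl⟩ := Submodule.mem_sup.1 hr
  obtain ⟨a, rfl⟩ := (p.mem_range _).1 ha
  obtain ⟨b, rfl⟩ := (q.mem_range _).1 hb
  have hab : p a + q b ∈ p.ker ⊓ q.ker := by
    simpa using sub_mem hu (LieSubmodule.lie_le_inf _ _ hk)
  rwa [apply_add_apply_eq_zero hp hq hpq hab, zero_add]

end LieHom

namespace FreeLieAlgebra

variable {R ι : Type*} [CommRing R]

theorem eq_top_of_forall_of_mem {K : LieSubalgebra R (FreeLieAlgebra R ι)}
    (h : ∀ i, of R i ∈ K) : K = ⊤ := by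
  let g : FreeLieAlgebra R ι →ₗ⁅R⁆ K := lift R fun i ↦ ⟨of R i, h i⟩
  have hg : K.incl.comp g = LieHom.id := hom_ext fun i ↦ by simp [g]
  refine eq_top_iff.2 fun x _ ↦ ?_
  rw [← LieHom.id_apply (R := R) x, ← hg]
  exact (g x).2

variable (R) in
noncomputable def eraseGenerators (s : Set ι) : FreeLieAlgebra R ι →ₗ⁅R⁆ FreeLieAlgebra R ι :=
  lift R (sᶜ.indicator (of R))

theorem eraseGenerators_of (s : Set ι) (i : ι) :
    eraseGenerators R s (of R i) = sᶜ.indicator (of R) i :=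
  lift_of_apply _ _

theorem eraseGenerators_eraseGenerators (s t : Set ι) (x : FreeLieAlgebra R ι) :
    eraseGenerators R s (eraseGenerators R t x) = eraseGenerators R (s ∪ t) x := by
  have : (eraseGenerators R s).comp (eraseGenerators R t) = eraseGenerators R (s ∪ t) :=
    hom_ext fun i ↦ by
      by_cases hs : i ∈ s <;> by_cases ht : i ∈ t <;> simp [eraseGenerators_of, hs, ht]
  exact LieHom.congr_fun this x

theorem ker_eraseGenerators (s : Set ι) :
    (eraseGenerators R s).ker = LieSubmodule.lieSpan R _ (of R '' s) := by
  set I := LieSubmodule.lieSpan R (FreeLieAlgebra R ι) (of R '' s)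
  refine le_antisymm (fun x hx ↦ ?_) ?_
  · let π : FreeLieAlgebra R ι →ₗ⁅R⁆ FreeLieAlgebra R ι ⧸ I :=
      { LieSubmodule.Quotient.mk' I with map_lie' := rfl }
    have π_eq_zero {y} : π y = 0 ↔ y ∈ I := LieSubmodule.Quotient.mk_eq_zero I
    have hπ : π.comp (eraseGenerators R s) = π := hom_ext fun i ↦ by
      by_cases hi : i ∈ s
      · rw [LieHom.comp_apply, eraseGenerators_of, Set.indicator_of_notMem (by simpa),
          map_zero, eq_comm, π_eq_zero]
        exact LieSubmodule.subset_lieSpan ⟨i, hi, rfl⟩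
      · rw [LieHom.comp_apply, eraseGenerators_of, Set.indicator_of_mem hi]
    rw [LieHom.mem_ker] at hx
    rw [← π_eq_zero, ← hπ, LieHom.comp_apply, hx, map_zero]
  · rw [LieSubmodule.lieSpan_le]
    rintro _ ⟨i, hi, rfl⟩
    simp [LieHom.mem_ker, eraseGenerators_of, hi]

theorem range_sup_range_eraseGenerators {s t : Set ι} (h : Disjoint s t) :
    (eraseGenerators R s).range ⊔ (eraseGenerators R t).range = ⊤ := by
  refine eq_top_of_forall_of_mem fun i ↦ ?_
  have mem_range {u : Set ι} (hi : i ∉ u) : of R i ∈ (eraseGenerators R u).range :=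
    (LieHom.mem_range _ _).2 ⟨of R i, by simp [eraseGenerators_of, hi]⟩
  by_cases hi : i ∈ s
  · exact le_sup_right (a := (eraseGenerators R s).range)
      (mem_range (h.notMem_of_mem_left hi))
  · exact le_sup_left (b := (eraseGenerators R t).range) (mem_range hi)

theorem lieSpan_inf_lieSpan_eq_lie {s t : Set ι} (h : Disjoint s t) :
    LieSubmodule.lieSpan R (FreeLieAlgebra R ι) (of R '' s) ⊓
        LieSubmodule.lieSpan R (FreeLieAlgebra R ι) (of R '' t) =
      ⁅LieSubmodule.lieSpan R (FreeLieAlgebra R ι) (of R '' s),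
        LieSubmodule.lieSpan R (FreeLieAlgebra R ι) (of R '' t)⁆ := by
  have idem (u : Set ι) (x) :
      eraseGenerators R u (eraseGenerators R u x) = eraseGenerators R u x := by
    rw [eraseGenerators_eraseGenerators, Set.union_self]
  rw [← ker_eraseGenerators, ← ker_eraseGenerators]
  refine LieHom.ker_inf_ker_eq_lie (idem s) (idem t) (fun x ↦ ?_)
    (range_sup_range_eraseGenerators h)
  rw [eraseGenerators_eraseGenerators, eraseGenerators_eraseGenerators, Set.union_comm]

end FreeLieAlgebra

theorem intersection_of_ideals_eq_bracket :
    lieIdealGen X ⊓ lieIdealGen Y = ⁅lieIdealGen X, lieIdealGen Y⁆ := by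
  simp only [lieIdealGen, X, Y, ← Set.image_singleton]
  exact lieSpan_inf_lieSpan_eq_lie (by simp)
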